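/- arXiv:2205.10155 — 4 statements merged into one kernel-verified Lean document; each statement's English description precedes it below -/
import Mathlib

section
/- Let Δ: ℝ → ℝ be sector-bounded in [α̂, β̂]. Suppose there exist a symmetric positive-definite matrix P ∈ ℝ^{d×d}, a scalar λ ≥ 0, and a scalar γ̂ > 0 such that the block matrix M = [[AᵀPA − P, AᵀPB₁, AᵀPB₂], [B₁ᵀPA, B₁ᵀPB₁, B₁ᵀPB₂], [B₂ᵀPA, B₂ᵀPB₁, B₂ᵀPB₂ − γ̂²I]] + λ·NᵀSN + KᵀK is negative definite, where N = [[C₁, D₁₁, D₁₂], [0, 1, 0]], S = [[−α̂β̂, (α̂+β̂)/2], [(α̂+β̂)/2, −1]], and K = [C₂, D₂₁, D₂₂]. Then for any sequences x: ℕ → ℝ^d, h, p: ℕ → ℝ, r: ℕ → ℝ^k, e: ℕ → ℝ^l with x[0] = 0 satisfying, for all n, x[n+1] = A x[n] + B₁ h[n] + B₂ r[n], p[n] = C₁ x[n] + D₁₁ h[n] + D₁₂ r[n], e[n] = C₂ x[n] + D₂₁ h[n] + D₂₂ r[n], and h[n] = Δ(p[n]), it holds for every N ∈ ℕ that Σ_{n=0}^{N}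 ‖e[n]‖² ≤ γ̂² Σ_{n=0}^{N} ‖r[n]‖². In particular the ℓ₂ gain from r to e is at most γ̂. -/
open Matrix Finset

/-- Horizontal concatenation of three matrices with the same row type. -/
noncomputable def concat3 {m : Type*} {d k : ℕ} (X : Matrix m (Fin d) ℝ) (Y : Matrix m (Fin 1) ℝ)
    (Z : Matrix m (Fin k) ℝ) : Matrix m (Fin d ⊕ (Fin 1 ⊕ Fin k)) ℝ :=
  Matrix.of fun i => Sum.elim (X i) (Sum.elim (Y i) (Z i))

/-- The matrix N = [[C₁, D₁₁, D₁₂], [0, 1, 0]]. -/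
noncomputable def Nmat {d k : ℕ} (C₁ : Matrix (Fin 1) (Fin d) ℝ) (D₁₁ : ℝ)
    (D₁₂ : Matrix (Fin 1) (Fin k) ℝ) : Matrix (Fin 2) (Fin d ⊕ (Fin 1 ⊕ Fin k)) ℝ :=
  concat3 (Matrix.of ![C₁ 0, 0]) (Matrix.of ![fun _ => D₁₁, fun _ => 1])
    (Matrix.of ![D₁₂ 0, 0])

/-- The sector matrix S = [[−α̂β̂, (α̂+β̂)/2], [(α̂+β̂)/2, −1]]. -/
noncomputable def Smat (αhat βhat : ℝ) : Matrix (Fin 2) (Fin 2) ℝ :=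
  !![-(αhat * βhat), (αhat + βhat) / 2; (αhat + βhat) / 2, -1]

/-- The block-diagonal matrix diag(P, 0, γ̂²·I). -/
noncomputable def diag3 {d k : ℕ} (P : Matrix (Fin d) (Fin d) ℝ) (γhat : ℝ) :
    Matrix (Fin d ⊕ (Fin 1 ⊕ Fin k)) (Fin d ⊕ (Fin 1 ⊕ Fin k)) ℝ :=
  Matrix.fromBlocks P 0 0 (Matrix.fromBlocks 0 0 0 (γhat ^ 2 • (1 : Matrix (Fin k) (Fin k) ℝ)))

/-- The LMI matrix
M = [[AᵀPA − P, AᵀPB₁, AᵀPB₂], [B₁ᵀPA, B₁ᵀPB₁, B₁ᵀPB₂], [B₂ᵀPA, B₂ᵀPB₁, B₂ᵀPB₂ − γ̂²I]]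
    + λ·NᵀSN + KᵀK
expressed as [A B₁ B₂]ᵀ P [A B₁ B₂] − diag(P, 0, γ̂²I) + λ·NᵀSN + KᵀK. -/
noncomputable def lmiMat {d k l : ℕ}
    (A : Matrix (Fin d) (Fin d) ℝ) (B₁ : Matrix (Fin d) (Fin 1) ℝ)
    (B₂ : Matrix (Fin d) (Fin k) ℝ)
    (C₁ : Matrix (Fin 1) (Fin d) ℝ) (D₁₁ : ℝ) (D₁₂ : Matrix (Fin 1) (Fin k) ℝ)
    (C₂ : Matrix (Fin l) (Fin d) ℝ) (D₂₁ : Matrix (Fin l) (Fin 1) ℝ)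
    (D₂₂ : Matrix (Fin l) (Fin k) ℝ)
    (P : Matrix (Fin d) (Fin d) ℝ) (lam γhat αhat βhat : ℝ) :
    Matrix (Fin d ⊕ (Fin 1 ⊕ Fin k)) (Fin d ⊕ (Fin 1 ⊕ Fin k)) ℝ :=
  (concat3 A B₁ B₂)ᵀ * P * concat3 A B₁ B₂ - diag3 P γhat
    + lam • ((Nmat C₁ D₁₁ D₁₂)ᵀ * Smat αhat βhat * Nmat C₁ D₁₁ D₁₂)
    + (concat3 C₂ D₂₁ D₂₂)ᵀ * concat3 C₂ D₂₁ D₂₂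

/-!
The quadratic storage function `V x = xᵀ P x` certifies the gain. Evaluating the LMI at the stacked
vector `(x[n], h[n], r[n])` gives `V x[n+1] − V x[n] − γ̂²‖r[n]‖² + λ σ[n] + ‖e[n]‖² ≤ 0`, where
`σ[n] = (p[n], h[n])ᵀ S (p[n], h[n]) = (h[n] − α̂ p[n])(β̂ p[n] − h[n]) ≥ 0` by the sector condition.
Dropping `λ σ[n]` and summing, the storage terms telescope to `V x[N+1] − V x[0] = V x[N+1] ≥ 0`.
-/

lemma dotProduct_transpose_mul_mulVec {m n : Type*} [Fintype m] [Fintype n]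
    (G H : Matrix m n ℝ) (v : n → ℝ) :
    v ⬝ᵥ ((Gᵀ * H) *ᵥ v) = (G *ᵥ v) ⬝ᵥ (H *ᵥ v) := by
  rw [← mulVec_mulVec, dotProduct_mulVec, vecMul_transpose]

lemma concat3_mulVec_sumElim {m : Type*} {d k : ℕ} (X : Matrix m (Fin d) ℝ)
    (Y : Matrix m (Fin 1) ℝ) (Z : Matrix m (Fin k) ℝ)
    (u : Fin d → ℝ) (v : Fin 1 → ℝ) (w : Fin k → ℝ) :
    concat3 X Y Z *ᵥ Sum.elim u (Sum.elim v w) = X *ᵥ u + Y *ᵥ v + Z *ᵥ w := by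
  funext i
  change Sum.elim (X i) (Sum.elim (Y i) (Z i)) ⬝ᵥ Sum.elim u (Sum.elim v w) = _
  rw [sumElim_dotProduct_sumElim, sumElim_dotProduct_sumElim, ← add_assoc]
  rfl

lemma Nmat_mulVec_sumElim {d k : ℕ} (C₁ : Matrix (Fin 1) (Fin d) ℝ) (D₁₁ : ℝ)
    (D₁₂ : Matrix (Fin 1) (Fin k) ℝ) (u : Fin d → ℝ) (h : ℝ) (w : Fin k → ℝ) :
    Nmat C₁ D₁₁ D₁₂ *ᵥ Sum.elim u (Sum.elim (fun _ => h) w) =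
      ![C₁ 0 ⬝ᵥ u + D₁₁ * h + D₁₂ 0 ⬝ᵥ w, h] := by
  rw [Nmat, concat3_mulVec_sumElim]
  funext i
  fin_cases i <;> simp [dotProduct]

lemma sumElim_dotProduct_diag3_mulVec {d k : ℕ} (P : Matrix (Fin d) (Fin d) ℝ) (γ : ℝ)
    (u : Fin d → ℝ) (v : Fin 1 → ℝ) (w : Fin k → ℝ) :
    Sum.elim u (Sum.elim v w) ⬝ᵥ (diag3 P γ *ᵥ Sum.elim u (Sum.elim v w)) =
      u ⬝ᵥ P *ᵥ u + γ ^ 2 * (w ⬝ᵥ w) := by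
  simp [diag3, fromBlocks_mulVec, sumElim_dotProduct_sumElim, smul_mulVec]

lemma Smat_quadForm_eq (α β p h : ℝ) :
    ![p, h] ⬝ᵥ (Smat α β *ᵥ ![p, h]) = (h - α * p) * (β * p - h) := by
  simp only [Smat, mulVec, dotProduct, Fin.sum_univ_two, of_apply, cons_val', cons_val_fin_one,
    cons_val_zero, cons_val_one]
  ring

lemma lmiMat_quadForm {d k l : ℕ}
    (A : Matrix (Fin d) (Fin d) ℝ) (B₁ : Matrix (Fin d) (Fin 1) ℝ)
    (B₂ : Matrix (Fin d) (Fin k) ℝ)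
    (C₁ : Matrix (Fin 1) (Fin d) ℝ) (D₁₁ : ℝ) (D₁₂ : Matrix (Fin 1) (Fin k) ℝ)
    (C₂ : Matrix (Fin l) (Fin d) ℝ) (D₂₁ : Matrix (Fin l) (Fin 1) ℝ)
    (D₂₂ : Matrix (Fin l) (Fin k) ℝ)
    (P : Matrix (Fin d) (Fin d) ℝ) (lam γ α β : ℝ) (z : Fin d ⊕ (Fin 1 ⊕ Fin k) → ℝ) :
    z ⬝ᵥ (lmiMat A B₁ B₂ C₁ D₁₁ D₁₂ C₂ D₂₁ D₂₂ P lam γ α β *ᵥ z) =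
      (concat3 A B₁ B₂ *ᵥ z) ⬝ᵥ (P *ᵥ (concat3 A B₁ B₂ *ᵥ z)) - z ⬝ᵥ (diag3 P γ *ᵥ z)
      + lam * ((Nmat C₁ D₁₁ D₁₂ *ᵥ z) ⬝ᵥ (Smat α β *ᵥ (Nmat C₁ D₁₁ D₁₂ *ᵥ z)))
      + (concat3 C₂ D₂₁ D₂₂ *ᵥ z) ⬝ᵥ (concat3 C₂ D₂₁ D₂₂ *ᵥ z) := by
  rw [lmiMat, add_mulVec, add_mulVec, sub_mulVec, smul_mulVec, dotProduct_add, dotProduct_add,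
    dotProduct_sub, dotProduct_smul, smul_eq_mul, Matrix.mul_assoc, Matrix.mul_assoc,
    dotProduct_transpose_mul_mulVec, dotProduct_transpose_mul_mulVec,
    dotProduct_transpose_mul_mulVec, ← mulVec_mulVec, ← mulVec_mulVec]

theorem lure_dissipation_step {d k l : ℕ}
    (A : Matrix (Fin d) (Fin d) ℝ) (B₁ : Matrix (Fin d) (Fin 1) ℝ)
    (B₂ : Matrix (Fin d) (Fin k) ℝ)
    (C₁ : Matrix (Fin 1) (Fin d) ℝ) (D₁₁ : ℝ) (D₁₂ : Matrix (Fin 1) (Fin k) ℝ)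
    (C₂ : Matrix (Fin l) (Fin d) ℝ) (D₂₁ : Matrix (Fin l) (Fin 1) ℝ)
    (D₂₂ : Matrix (Fin l) (Fin k) ℝ)
    {P : Matrix (Fin d) (Fin d) ℝ} {lam γ α β : ℝ} (hlam : 0 ≤ lam)
    (hM : (-(lmiMat A B₁ B₂ C₁ D₁₁ D₁₂ C₂ D₂₁ D₂₂ P lam γ α β)).PosSemidef)
    {u x' : Fin d → ℝ} {h p : ℝ} {w : Fin k → ℝ} {e : Fin l → ℝ}
    (hx' : x' = A *ᵥ u + B₁ *ᵥ (fun _ => h) + B₂ *ᵥ w)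
    (hp : p = C₁ 0 ⬝ᵥ u + D₁₁ * h + D₁₂ 0 ⬝ᵥ w)
    (he : e = C₂ *ᵥ u + D₂₁ *ᵥ (fun _ => h) + D₂₂ *ᵥ w)
    (hsector : (h - α * p) * (β * p - h) ≥ 0) :
    e ⬝ᵥ e + x' ⬝ᵥ P *ᵥ x' ≤ u ⬝ᵥ P *ᵥ u + γ ^ 2 * (w ⬝ᵥ w) := by
  set z : Fin d ⊕ (Fin 1 ⊕ Fin k) → ℝ := Sum.elim u (Sum.elim (fun _ => h) w)
  have hLMI : z ⬝ᵥ (lmiMat A B₁ B₂ C₁ D₁₁ D₁₂ C₂ D₂₁ D₂₂ P lam γ α β *ᵥ z) ≤ 0 := by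
    simpa [neg_mulVec] using hM.dotProduct_mulVec_nonneg z
  have hσ : 0 ≤ lam * ((Nmat C₁ D₁₁ D₁₂ *ᵥ z) ⬝ᵥ (Smat α β *ᵥ (Nmat C₁ D₁₁ D₁₂ *ᵥ z))) := by
    rw [Nmat_mulVec_sumElim, ← hp, Smat_quadForm_eq]
    exact mul_nonneg hlam hsector
  rw [lmiMat_quadForm, concat3_mulVec_sumElim, concat3_mulVec_sumElim, ← hx', ← he,
    sumElim_dotProduct_diag3_mulVec] at hLMI
  linarith

theorem sum_range_le_of_dissipation {s w V : ℕ → ℝ} (hV0 : V 0 = 0) (hV : ∀ n, 0 ≤ V n)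
    (hstep : ∀ n, s n + V (n + 1) ≤ V n + w n) (N : ℕ) :
    ∑ n ∈ range N, s n ≤ ∑ n ∈ range N, w n := by
  have htel : ∑ n ∈ range N, (s n + (V (n + 1) - V n)) ≤ ∑ n ∈ range N, w n :=
    sum_le_sum fun n _ => by linarith [hstep n]
  rw [sum_add_distrib, sum_range_sub, hV0] at htel
  linarith [hV N]

theorem lure_l2_gain_general {d k l : ℕ}
    (A : Matrix (Fin d) (Fin d) ℝ) (B₁ : Matrix (Fin d) (Fin 1) ℝ)
    (B₂ : Matrix (Fin d) (Fin k) ℝ)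
    (C₁ : Matrix (Fin 1) (Fin d) ℝ) (D₁₁ : ℝ) (D₁₂ : Matrix (Fin 1) (Fin k) ℝ)
    (C₂ : Matrix (Fin l) (Fin d) ℝ) (D₂₁ : Matrix (Fin l) (Fin 1) ℝ)
    (D₂₂ : Matrix (Fin l) (Fin k) ℝ)
    (αhat βhat : ℝ) (Δ : ℝ → ℝ)
    (hΔ : ∀ q : ℝ, (Δ q - αhat * q) * (βhat * q - Δ q) ≥ 0)
    (P : Matrix (Fin d) (Fin d) ℝ) (lam γhat : ℝ)
    (hP : P.PosDef) (hlam : 0 ≤ lam)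
    (hM : (-(lmiMat A B₁ B₂ C₁ D₁₁ D₁₂ C₂ D₂₁ D₂₂ P lam γhat αhat βhat)).PosDef)
    (x : ℕ → Fin d → ℝ) (h p : ℕ → ℝ) (r : ℕ → Fin k → ℝ) (e : ℕ → Fin l → ℝ)
    (hx0 : x 0 = 0)
    (hx : ∀ n, x (n + 1) = A.mulVec (x n) + B₁.mulVec (fun _ => h n) + B₂.mulVec (r n))
    (hp : ∀ n, p n = C₁ 0 ⬝ᵥ x n + D₁₁ * h n + D₁₂ 0 ⬝ᵥ r n)
    (he : ∀ n, e n = C₂.mulVec (x n) + D₂₁.mulVec (fun _ => h n) + D₂₂.mulVec (r n))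
    (hh : ∀ n, h n = Δ (p n)) :
    ∀ N : ℕ, ∑ n ∈ Finset.range (N + 1), e n ⬝ᵥ e n ≤
      γhat ^ 2 * ∑ n ∈ Finset.range (N + 1), r n ⬝ᵥ r n := by
  intro N
  rw [mul_sum]
  refine sum_range_le_of_dissipation (V := fun n => x n ⬝ᵥ P *ᵥ x n) (by simp [hx0])
    (fun n => by simpa using hP.posSemidef.dotProduct_mulVec_nonneg (x n)) (fun n => ?_) (N + 1)
  exact lure_dissipation_step A B₁ B₂ C₁ D₁₁ D₁₂ C₂ D₂₁ D₂₂ hlam hM.posSemidef (hx n) (hp n)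
    (he n) (hh n ▸ hΔ (p n))

/-- If Δ is [α̂, β̂] sector-bounded and the LMI has a solution (P ≻ 0, λ ≥ 0, γ̂ > 0),
then along every trajectory of F_u(L, Δ) starting at x[0] = 0,
Σ_{n=0}^{N} ‖e[n]‖² ≤ γ̂² Σ_{n=0}^{N} ‖r[n]‖² for every N; i.e. the ℓ₂ gain from r to e
is at most γ̂. -/
theorem lure_l2_gain {d k l : ℕ}
    (A : Matrix (Fin d) (Fin d) ℝ) (B₁ : Matrix (Fin d) (Fin 1) ℝ)
    (B₂ : Matrix (Fin d) (Fin k) ℝ)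
    (C₁ : Matrix (Fin 1) (Fin d) ℝ) (D₁₁ : ℝ) (D₁₂ : Matrix (Fin 1) (Fin k) ℝ)
    (C₂ : Matrix (Fin l) (Fin d) ℝ) (D₂₁ : Matrix (Fin l) (Fin 1) ℝ)
    (D₂₂ : Matrix (Fin l) (Fin k) ℝ)
    (αhat βhat : ℝ) (Δ : ℝ → ℝ)
    (hΔ : ∀ q : ℝ, (Δ q - αhat * q) * (βhat * q - Δ q) ≥ 0)
    (P : Matrix (Fin d) (Fin d) ℝ) (lam γhat : ℝ)
    (hP : P.PosDef) (hlam : 0 ≤ lam) (hγ : 0 < γhat)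
    (hM : (-(lmiMat A B₁ B₂ C₁ D₁₁ D₁₂ C₂ D₂₁ D₂₂ P lam γhat αhat βhat)).PosDef)
    (x : ℕ → Fin d → ℝ) (h p : ℕ → ℝ) (r : ℕ → Fin k → ℝ) (e : ℕ → Fin l → ℝ)
    (hx0 : x 0 = 0)
    (hx : ∀ n, x (n + 1) = A.mulVec (x n) + B₁.mulVec (fun _ => h n) + B₂.mulVec (r n))
    (hp : ∀ n, p n = C₁ 0 ⬝ᵥ x n + D₁₁ * h n + D₁₂ 0 ⬝ᵥ r n)
    (he : ∀ n, e n = C₂.mulVec (x n) + D₂₁.mulVec (fun _ => h n) + D₂₂.mulVec (r n))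
    (hh : ∀ n, h n = Δ (p n)) :
    ∀ N : ℕ, ∑ n ∈ Finset.range (N + 1), e n ⬝ᵥ e n ≤
      γhat ^ 2 * ∑ n ∈ Finset.range (N + 1), r n ⬝ᵥ r n :=
  lure_l2_gain_general A B₁ B₂ C₁ D₁₁ D₁₂ C₂ D₂₁ D₂₂ αhat βhat Δ hΔ P lam γhat hP hlam hM x h p r e
    hx0 hx hp he hh
end

section
/- Let P ∈ ℝ^{d×d} be symmetric, λ, γ̂ ∈ ℝ, and suppose the block matrix M = [[AᵀPA − P, AᵀPB₁, AᵀPB₂], [B₁ᵀPA, B₁ᵀPB₁, B₁ᵀPB₂], [B₂ᵀPA, B₂ᵀPB₁, B₂ᵀPB₂ − γ̂²I]] + λ·NᵀSN + KᵀK is negative definite, where N = [[C₁, D₁₁, D₁₂], [0, 1, 0]], S = [[−α̂β̂, (α̂+β̂)/2], [(α̂+β̂)/2, −1]], and K = [C₂, D₂₁, D₂₂]. Then for every x ∈ ℝ^d, h ∈ ℝ, r ∈ ℝ^k with (x, h, r) ≠ 0, writing x⁺ = Ax + B₁h + B₂r, p = C₁x + D₁₁h + D₁₂r, and e = C₂x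 + D₂₁h + D₂₂r, the dissipation inequality (x⁺)ᵀP x⁺ − xᵀP x − γ̂² rᵀr + λ(h − α̂p)(β̂p − h) + eᵀe < 0 holds. -/
/-!
The quadratic form of the LMI matrix at the stacked vector `(x, h, r)` is, block by block,
exactly the left-hand side of the dissipation inequality: the terms `Xᵀ Q X` evaluate to
`(X z)ᵀ Q (X z)`, and `N z = (p, h)` turns the sector term into `(h - α̂ p)(β̂ p - h)`.
Negative definiteness at the nonzero vector `(x, h, r)` gives the strict inequality.
-/

open Matrix Finset

section QuadraticForm

variable {R m n : Type*} [CommSemiring R] [Fintype m] [Fintype n]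

theorem dotProduct_mulVec_transpose_mul_mul (X : Matrix m n R) (Q : Matrix m m R) (z : n → R) :
    z ⬝ᵥ (Xᵀ * Q * X) *ᵥ z = (X *ᵥ z) ⬝ᵥ Q *ᵥ (X *ᵥ z) := by
  rw [← mulVec_mulVec, ← mulVec_mulVec, dotProduct_mulVec, vecMul_transpose]

theorem dotProduct_mulVec_transpose_mul_self (X : Matrix m n R) (z : n → R) :
    z ⬝ᵥ (Xᵀ * X) *ᵥ z = (X *ᵥ z) ⬝ᵥ (X *ᵥ z) := by
  rw [← mulVec_mulVec, dotProduct_mulVec, vecMul_transpose]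

end QuadraticForm

section BlockVectors

variable {d k : ℕ}

theorem sumElim_sumElim_ne_zero {x : Fin d → ℝ} {y : Fin 1 → ℝ} {r : Fin k → ℝ}
    (h : ¬(x = 0 ∧ y = 0 ∧ r = 0)) : Sum.elim x (Sum.elim y r) ≠ 0 := by
  rwa [← Sum.elim_zero_zero, ← Sum.elim_zero_zero, Ne, Sum.elim_eq_iff, Sum.elim_eq_iff]

theorem concat3_mulVec {m : Type*} (X : Matrix m (Fin d) ℝ) (Y : Matrix m (Fin 1) ℝ)
    (Z : Matrix m (Fin k) ℝ) (x : Fin d → ℝ) (y : Fin 1 → ℝ) (r : Fin k → ℝ) :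
    concat3 X Y Z *ᵥ Sum.elim x (Sum.elim y r) = X *ᵥ x + Y *ᵥ y + Z *ᵥ r := by
  funext i
  simp [concat3, mulVec, dotProduct, Fintype.sum_sum_type, add_assoc]

theorem Nmat_mulVec (C₁ : Matrix (Fin 1) (Fin d) ℝ) (D₁₁ : ℝ)
    (D₁₂ : Matrix (Fin 1) (Fin k) ℝ) (x : Fin d → ℝ) (h : ℝ) (r : Fin k → ℝ) :
    Nmat C₁ D₁₁ D₁₂ *ᵥ Sum.elim x (Sum.elim (fun _ => h) r)
      = ![C₁ 0 ⬝ᵥ x + D₁₁ * h + D₁₂ 0 ⬝ᵥ r, h] := by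
  rw [Nmat, concat3_mulVec]
  funext i
  fin_cases i <;> simp [dotProduct]

theorem dotProduct_Smat_mulVec (αhat βhat p h : ℝ) :
    ![p, h] ⬝ᵥ Smat αhat βhat *ᵥ ![p, h] = (h - αhat * p) * (βhat * p - h) := by
  simp only [Smat, dotProduct, mulVec, Fin.sum_univ_two, of_apply, cons_val_zero, cons_val_one,
    cons_val_fin_one]
  ring

theorem dotProduct_diag3_mulVec (P : Matrix (Fin d) (Fin d) ℝ) (γhat : ℝ) (x : Fin d → ℝ)
    (y : Fin 1 → ℝ) (r : Fin k → ℝ) :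
    Sum.elim x (Sum.elim y r) ⬝ᵥ diag3 P γhat *ᵥ Sum.elim x (Sum.elim y r)
      = x ⬝ᵥ P *ᵥ x + γhat ^ 2 * (r ⬝ᵥ r) := by
  simp [diag3, fromBlocks_mulVec, sumElim_dotProduct_sumElim, smul_mulVec, dotProduct_smul]

end BlockVectors

theorem dotProduct_lmiMat_mulVec {d k l : ℕ}
    (A : Matrix (Fin d) (Fin d) ℝ) (B₁ : Matrix (Fin d) (Fin 1) ℝ)
    (B₂ : Matrix (Fin d) (Fin k) ℝ)
    (C₁ : Matrix (Fin 1) (Fin d) ℝ) (D₁₁ : ℝ) (D₁₂ : Matrix (Fin 1) (Fin k) ℝ)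
    (C₂ : Matrix (Fin l) (Fin d) ℝ) (D₂₁ : Matrix (Fin l) (Fin 1) ℝ)
    (D₂₂ : Matrix (Fin l) (Fin k) ℝ) (P : Matrix (Fin d) (Fin d) ℝ)
    (lam γhat αhat βhat : ℝ) (x : Fin d → ℝ) (h : ℝ) (r : Fin k → ℝ) :
    Sum.elim x (Sum.elim (fun _ => h) r) ⬝ᵥ
        lmiMat A B₁ B₂ C₁ D₁₁ D₁₂ C₂ D₂₁ D₂₂ P lam γhat αhat βhat *ᵥ
          Sum.elim x (Sum.elim (fun _ => h) r)
      = (A *ᵥ x + B₁ *ᵥ (fun _ => h) + B₂ *ᵥ r) ⬝ᵥ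
            P *ᵥ (A *ᵥ x + B₁ *ᵥ (fun _ => h) + B₂ *ᵥ r)
        - x ⬝ᵥ P *ᵥ x - γhat ^ 2 * (r ⬝ᵥ r)
        + lam * (h - αhat * (C₁ 0 ⬝ᵥ x + D₁₁ * h + D₁₂ 0 ⬝ᵥ r))
            * (βhat * (C₁ 0 ⬝ᵥ x + D₁₁ * h + D₁₂ 0 ⬝ᵥ r) - h)
        + (C₂ *ᵥ x + D₂₁ *ᵥ (fun _ => h) + D₂₂ *ᵥ r) ⬝ᵥ
            (C₂ *ᵥ x + D₂₁ *ᵥ (fun _ => h) + D₂₂ *ᵥ r) := by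
  rw [lmiMat, add_mulVec, add_mulVec, sub_mulVec, dotProduct_add, dotProduct_add, dotProduct_sub,
    smul_mulVec, dotProduct_smul, smul_eq_mul, dotProduct_mulVec_transpose_mul_mul,
    dotProduct_mulVec_transpose_mul_mul, dotProduct_mulVec_transpose_mul_self,
    dotProduct_diag3_mulVec, concat3_mulVec, concat3_mulVec, Nmat_mulVec, dotProduct_Smat_mulVec]
  ring

theorem lmi_implies_dissipation_general {d k l : ℕ}
    (A : Matrix (Fin d) (Fin d) ℝ) (B₁ : Matrix (Fin d) (Fin 1) ℝ)
    (B₂ : Matrix (Fin d) (Fin k) ℝ)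
    (C₁ : Matrix (Fin 1) (Fin d) ℝ) (D₁₁ : ℝ) (D₁₂ : Matrix (Fin 1) (Fin k) ℝ)
    (C₂ : Matrix (Fin l) (Fin d) ℝ) (D₂₁ : Matrix (Fin l) (Fin 1) ℝ)
    (D₂₂ : Matrix (Fin l) (Fin k) ℝ)
    (αhat βhat : ℝ)
    (P : Matrix (Fin d) (Fin d) ℝ) (lam γhat : ℝ)
    (hM : (-(lmiMat A B₁ B₂ C₁ D₁₁ D₁₂ C₂ D₂₁ D₂₂ P lam γhat αhat βhat)).PosDef)
    (x : Fin d → ℝ) (h : ℝ) (r : Fin k → ℝ)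
    (hnz : ¬(x = 0 ∧ h = 0 ∧ r = 0)) :
    (A.mulVec x + B₁.mulVec (fun _ => h) + B₂.mulVec r) ⬝ᵥ
        P.mulVec (A.mulVec x + B₁.mulVec (fun _ => h) + B₂.mulVec r)
      - x ⬝ᵥ P.mulVec x - γhat ^ 2 * (r ⬝ᵥ r)
      + lam * (h - αhat * (C₁ 0 ⬝ᵥ x + D₁₁ * h + D₁₂ 0 ⬝ᵥ r))
          * (βhat * (C₁ 0 ⬝ᵥ x + D₁₁ * h + D₁₂ 0 ⬝ᵥ r) - h)
      + (C₂.mulVec x + D₂₁.mulVec (fun _ => h) + D₂₂.mulVec r) ⬝ᵥ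
          (C₂.mulVec x + D₂₁.mulVec (fun _ => h) + D₂₂.mulVec r) < 0 := by
  have hz : Sum.elim x (Sum.elim (fun _ => h) r) ≠ 0 :=
    sumElim_sumElim_ne_zero (by simpa [funext_iff] using hnz)
  have hpos := hM.dotProduct_mulVec_pos hz
  rwa [star_trivial, neg_mulVec, dotProduct_neg, neg_pos, dotProduct_lmiMat_mulVec] at hpos

/-- If P is symmetric and the LMI matrix is negative definite, then for every
(x, h, r) ≠ 0, writing x⁺ = Ax + B₁h + B₂r, p = C₁x + D₁₁h + D₁₂r,
e = C₂x + D₂₁h + D₂₂r, the strict dissipation inequality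
(x⁺)ᵀPx⁺ − xᵀPx − γ̂²rᵀr + λ(h − α̂p)(β̂p − h) + eᵀe < 0 holds. -/
theorem lmi_implies_dissipation {d k l : ℕ}
    (A : Matrix (Fin d) (Fin d) ℝ) (B₁ : Matrix (Fin d) (Fin 1) ℝ)
    (B₂ : Matrix (Fin d) (Fin k) ℝ)
    (C₁ : Matrix (Fin 1) (Fin d) ℝ) (D₁₁ : ℝ) (D₁₂ : Matrix (Fin 1) (Fin k) ℝ)
    (C₂ : Matrix (Fin l) (Fin d) ℝ) (D₂₁ : Matrix (Fin l) (Fin 1) ℝ)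
    (D₂₂ : Matrix (Fin l) (Fin k) ℝ)
    (αhat βhat : ℝ)
    (P : Matrix (Fin d) (Fin d) ℝ) (lam γhat : ℝ)
    (hP : P.IsSymm)
    (hM : (-(lmiMat A B₁ B₂ C₁ D₁₁ D₁₂ C₂ D₂₁ D₂₂ P lam γhat αhat βhat)).PosDef)
    (x : Fin d → ℝ) (h : ℝ) (r : Fin k → ℝ)
    (hnz : ¬(x = 0 ∧ h = 0 ∧ r = 0)) :
    (A.mulVec x + B₁.mulVec (fun _ => h) + B₂.mulVec r) ⬝ᵥ
        P.mulVec (A.mulVec x + B₁.mulVec (fun _ => h) + B₂.mulVec r)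
      - x ⬝ᵥ P.mulVec x - γhat ^ 2 * (r ⬝ᵥ r)
      + lam * (h - αhat * (C₁ 0 ⬝ᵥ x + D₁₁ * h + D₁₂ 0 ⬝ᵥ r))
          * (βhat * (C₁ 0 ⬝ᵥ x + D₁₁ * h + D₁₂ 0 ⬝ᵥ r) - h)
      + (C₂.mulVec x + D₂₁.mulVec (fun _ => h) + D₂₂.mulVec r) ⬝ᵥ
          (C₂.mulVec x + D₂₁.mulVec (fun _ => h) + D₂₂.mulVec r) < 0 :=
  lmi_implies_dissipation_general A B₁ B₂ C₁ D₁₁ D₁₂ C₂ D₂₁ D₂₂ αhat βhat P lam γhat hM x h r hnz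
end

section
/- Let α_max, c_max be reals with 0 < α_max < 1 and c_max ≥ 0, and let α, c: ℕ → ℝ satisfy 0 < α[n] ≤ α_max and 0 ≤ c[n] ≤ c_max for all n. Let q, i: ℕ → ℝ satisfy the recursion q[n+1] = α[n] q[n] + c[n] i[n] for all n. Then for every N ∈ ℕ, Σ_{n=0}^{N} q[n]² ≤ (c_max/(1 − α_max))² Σ_{n=0}^{N} i[n]² + q[0]²/(1 − α_max). In particular, if q[0] = 0 the ℓ₂ gain from i to q is at most Γ₁ = c_max/(1 − α_max). -/
/-!
The storage function `q n ^ 2` contracts up to a supply term: by convexity of the square,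
`(a x + b y)² ≤ a x² + (b² / (1 - a)) y²` for `0 ≤ a < 1`, so
`q (n + 1)² ≤ αmax q n² + (cmax² / (1 - αmax)) i n²`. Summing over `n ≤ N` and shifting the
index gives `(1 - αmax) ∑ q n² ≤ q 0² + (cmax² / (1 - αmax)) ∑ i n²`.
-/

open Finset

lemma sq_mul_add_mul_le {a : ℝ} (ha₀ : 0 ≤ a) (ha₁ : a < 1) (b x y : ℝ) :
    (a * x + b * y) ^ 2 ≤ a * x ^ 2 + b ^ 2 / (1 - a) * y ^ 2 := by
  have h : 0 < 1 - a := by linarith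
  have gap : a * x ^ 2 + b ^ 2 / (1 - a) * y ^ 2 - (a * x + b * y) ^ 2
      = a * ((1 - a) * x - b * y) ^ 2 / (1 - a) := by
    field_simp
    ring
  have : 0 ≤ a * ((1 - a) * x - b * y) ^ 2 / (1 - a) := by positivity
  linarith

lemma sq_mul_add_mul_le_of_le {a amax b bmax : ℝ} (ha₀ : 0 ≤ a) (ha : a ≤ amax) (hamax : amax < 1)
    (hb₀ : 0 ≤ b) (hb : b ≤ bmax) (x y : ℝ) :
    (a * x + b * y) ^ 2 ≤ amax * x ^ 2 + bmax ^ 2 / (1 - amax) * y ^ 2 := by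
  have : 0 < 1 - amax := by linarith
  calc (a * x + b * y) ^ 2 ≤ a * x ^ 2 + b ^ 2 / (1 - a) * y ^ 2 :=
        sq_mul_add_mul_le ha₀ (ha.trans_lt hamax) b x y
    _ ≤ amax * x ^ 2 + bmax ^ 2 / (1 - amax) * y ^ 2 := by gcongr

lemma one_sub_mul_sum_range_le_of_le_mul_add {V w : ℕ → ℝ} {ρ : ℝ} (hV : ∀ n, 0 ≤ V n)
    (h : ∀ n, V (n + 1) ≤ ρ * V n + w n) (N : ℕ) :
    (1 - ρ) * ∑ n ∈ range (N + 1), V n ≤ V 0 + ∑ n ∈ range (N + 1), w n := by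
  have shift : ∑ n ∈ range (N + 1), V n ≤ V 0 + ∑ n ∈ range (N + 1), V (n + 1) := by
    rw [sum_range_succ' V N, sum_range_succ (fun n => V (n + 1)) N]
    linarith [hV (N + 1)]
  have step : ∑ n ∈ range (N + 1), V (n + 1) ≤ ρ * ∑ n ∈ range (N + 1), V n
      + ∑ n ∈ range (N + 1), w n := by
    rw [mul_sum, ← sum_add_distrib]
    exact sum_le_sum fun n _ => h n
  linarith

theorem ltv_state_l2_bound_general (αmax cmax : ℝ) (hα1 : αmax < 1)
    (α c : ℕ → ℝ)
    (hαn : ∀ n, 0 < α n ∧ α n ≤ αmax) (hcn : ∀ n, 0 ≤ c n ∧ c n ≤ cmax)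
    (q i : ℕ → ℝ) (hrec : ∀ n, q (n + 1) = α n * q n + c n * i n) :
    ∀ N : ℕ, ∑ n ∈ Finset.range (N + 1), q n ^ 2 ≤
      (cmax / (1 - αmax)) ^ 2 * ∑ n ∈ Finset.range (N + 1), i n ^ 2
        + q 0 ^ 2 / (1 - αmax) := by
  intro N
  have hgap : 0 < 1 - αmax := by linarith
  have dissipation : ∀ n, q (n + 1) ^ 2 ≤ αmax * q n ^ 2 + cmax ^ 2 / (1 - αmax) * i n ^ 2 :=
    fun n => hrec n ▸ sq_mul_add_mul_le_of_le (hαn n).1.le (hαn n).2 hα1 (hcn n).1 (hcn n).2 _ _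
  have summed := one_sub_mul_sum_range_le_of_le_mul_add (fun n => sq_nonneg (q n)) dissipation N
  rw [← mul_sum] at summed
  calc ∑ n ∈ range (N + 1), q n ^ 2
      ≤ (q 0 ^ 2 + cmax ^ 2 / (1 - αmax) * ∑ n ∈ range (N + 1), i n ^ 2) / (1 - αmax) := by
        rw [le_div_iff₀' hgap]
        exact summed
    _ = _ := by
        field_simp
        ring

/-- For the scalar linear time-varying recursion q[n+1] = α[n]q[n] + c[n]i[n] with
0 < α[n] ≤ α_max < 1 and 0 ≤ c[n] ≤ c_max, for every N,
Σ_{n=0}^{N} q[n]² ≤ (c_max/(1 − α_max))² Σ_{n=0}^{N} i[n]² + q[0]²/(1 − α_max);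
in particular if q[0] = 0 the ℓ₂ gain from i to q is at most c_max/(1 − α_max). -/
theorem ltv_state_l2_bound (αmax cmax : ℝ) (hα0 : 0 < αmax) (hα1 : αmax < 1)
    (hc : 0 ≤ cmax) (α c : ℕ → ℝ)
    (hαn : ∀ n, 0 < α n ∧ α n ≤ αmax) (hcn : ∀ n, 0 ≤ c n ∧ c n ≤ cmax)
    (q i : ℕ → ℝ) (hrec : ∀ n, q (n + 1) = α n * q n + c n * i n) :
    ∀ N : ℕ, ∑ n ∈ Finset.range (N + 1), q n ^ 2 ≤
      (cmax / (1 - αmax)) ^ 2 * ∑ n ∈ Finset.range (N + 1), i n ^ 2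
        + q 0 ^ 2 / (1 - αmax) :=
  ltv_state_l2_bound_general αmax cmax hα1 α c hαn hcn q i hrec
end

section
/- Fix positive reals R, C, L, T_on, T_off^min, T_off^max with T_off^min ≤ T_off^max, and λ ∈ [0,1]. Set T_s^min = T_on + T_off^min, T_s^max = T_on + T_off^max, τ₂ = L/R. For t ∈ ℝ define α(t) = 1 − (T_on + t)/(RC) − T_on(T_on + t)/(2LC), β(t) = (1/C)((1 − λ)T_on + t/2), γ(t) = (1/C)(λT_on + t/2). Assume T_s^max (1 + T_on/(2τ₂)) < RC. Let t_off: ℕ → ℝ satisfy T_off^min ≤ t_off[n] ≤ T_off^max for all n, and let ṽ, ĩ: ℕ → ℝ satisfy ṽ[0] = 0, ĩ[0] = 0, and the recursion ṽ[n+1] = α(t_off[n]) ṽ[n] + β(t_off[n]) ĩ[n] + γ(t_off[n]) ĩ[n+1] for all n. Then for every N ∈ ℕ, (Σ_{n=0}^{N} ṽ[n]²)^{1/2} ≤ Γ_{i→v} (Σ_{n=0}^{N} ĩ[n]²)^{1/2}, where Γ_{i→v} = (R/(1 + T_on/(2τ₂))) · (T_s^max/T_s^min). -/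
/-!
Writing μ = 1 + T_on/(2τ₂), the pole is α(t) = 1 − (T_on + t)μ/(RC), so the time-constant
condition gives |α(t_off[n])| ≤ ā := 1 − T_s^min μ/(RC) < 1. For a recursion
v[n+1] = a[n] v[n] + u[n] with |a[n]| ≤ ā < 1, Young's inequality gives the per-step energy bound
(1 − ā) v[n+1]² ≤ (1 − ā) ā v[n]² + u[n]², which sums to (1 − ā)² ‖v‖² ≤ ‖u‖².
The input u[n] = β ĩ[n] + γ ĩ[n+1] has β, γ ≥ 0, and every sum β(t) + γ(t') of coefficients
multiplying the same ĩ[m] is at most T_s^max/C, so Cauchy–Schwarz gives ‖u‖ ≤ (T_s^max/C) ‖ĩ‖.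
Finally (T_s^max/C)/(1 − ā) is exactly Γ_{i→v}.
-/

open Finset

lemma sq_mul_add_le_of_abs_le {a ā x y : ℝ} (ha : |a| ≤ ā) (hā : ā < 1) :
    (1 - ā) * (a * x + y) ^ 2 ≤ (1 - ā) * ā * x ^ 2 + y ^ 2 := by
  rcases ((abs_nonneg a).trans ha).eq_or_lt with hā0 | hā0
  · obtain rfl : a = 0 := abs_nonpos_iff.1 (hā0 ▸ ha)
    simp [← hā0]
  · have hsq : a ^ 2 ≤ ā ^ 2 := sq_le_sq' (abs_le.1 ha).1 (abs_le.1 ha).2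
    -- ā times the gap is (a(1 − ā)x − āy)² + (1 − ā)(ā² − a²)x²
    nlinarith [sq_nonneg (a * (1 - ā) * x - ā * y),
      mul_nonneg (mul_nonneg (sub_nonneg.2 hā.le) (sub_nonneg.2 hsq)) (sq_nonneg x)]

theorem sum_sq_le_of_contractive_recursion {a u v : ℕ → ℝ} {ā : ℝ} (hā : ā < 1)
    (ha : ∀ n, |a n| ≤ ā) (hv0 : v 0 = 0) (hrec : ∀ n, v (n + 1) = a n * v n + u n) (N : ℕ) :
    (1 - ā) ^ 2 * ∑ n ∈ range (N + 1), v n ^ 2 ≤ ∑ n ∈ range N, u n ^ 2 := by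
  have hā0 : 0 ≤ ā := (abs_nonneg _).trans (ha 0)
  have hshift : ∑ n ∈ range (N + 1), v n ^ 2 = ∑ n ∈ range N, v (n + 1) ^ 2 := by
    simp [sum_range_succ', hv0]
  have htrunc : ∑ n ∈ range N, v n ^ 2 ≤ ∑ n ∈ range (N + 1), v n ^ 2 :=
    sum_le_sum_of_subset_of_nonneg (range_subset_range.2 N.le_succ) fun _ _ _ => sq_nonneg _
  have henergy : (1 - ā) * ∑ n ∈ range N, v (n + 1) ^ 2 ≤
      (1 - ā) * ā * ∑ n ∈ range N, v n ^ 2 + ∑ n ∈ range N, u n ^ 2 := by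
    rw [mul_sum, mul_sum, ← sum_add_distrib]
    gcongr with n
    rw [hrec n]
    exact sq_mul_add_le_of_abs_le (ha n) hā
  rw [← hshift] at henergy
  linear_combination
    henergy + mul_le_mul_of_nonneg_left htrunc (mul_nonneg (sub_nonneg.2 hā.le) hā0)

section TwoTapFilter

variable {b c : ℕ → ℝ} {B : ℝ}

lemma sum_two_tap_le {w : ℕ → ℝ} (hb : ∀ n, 0 ≤ b n) (hc : ∀ n, 0 ≤ c n) (hw : ∀ n, 0 ≤ w n)
    (hbc : ∀ n, b n + c n ≤ B) (hcb : ∀ n, b (n + 1) + c n ≤ B) (N : ℕ) :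
    ∑ n ∈ range N, (b n * w n + c n * w (n + 1)) ≤ B * ∑ n ∈ range (N + 1), w n := by
  -- with the boundary term b N * w N the bound is inductive: each w m collects b m + c (m - 1)
  have hboundary : ∀ N, ∑ n ∈ range N, (b n * w n + c n * w (n + 1)) + b N * w N ≤
      B * ∑ n ∈ range (N + 1), w n := by
    intro N
    induction N with
    | zero =>
      simpa using
        mul_le_mul_of_nonneg_right (le_of_add_le_of_nonneg_left (hbc 0) (hc 0)) (hw 0)
    | succ N ih =>
      rw [sum_range_succ, sum_range_succ _ (N + 1)]
      nlinarith [mul_le_mul_of_nonneg_right (hcb N) (hw (N + 1))]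
  linarith [hboundary N, mul_nonneg (hb N) (hw N)]

theorem sum_sq_two_tap_le {x : ℕ → ℝ} (hb : ∀ n, 0 ≤ b n) (hc : ∀ n, 0 ≤ c n)
    (hbc : ∀ n, b n + c n ≤ B) (hcb : ∀ n, b (n + 1) + c n ≤ B) (N : ℕ) :
    ∑ n ∈ range N, (b n * x n + c n * x (n + 1)) ^ 2 ≤ B ^ 2 * ∑ n ∈ range (N + 1), x n ^ 2 := by
  have hB : 0 ≤ B := (add_nonneg (hb 0) (hc 0)).trans (hbc 0)
  have hcauchy : ∀ n, (b n * x n + c n * x (n + 1)) ^ 2 ≤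
      B * (b n * x n ^ 2 + c n * x (n + 1) ^ 2) := by
    intro n
    have hweighted : 0 ≤ b n * x n ^ 2 + c n * x (n + 1) ^ 2 := by
      have := hb n; have := hc n; positivity
    nlinarith [mul_nonneg (mul_nonneg (hb n) (hc n)) (sq_nonneg (x n - x (n + 1))),
      mul_le_mul_of_nonneg_right (hbc n) hweighted]
  calc ∑ n ∈ range N, (b n * x n + c n * x (n + 1)) ^ 2
      ≤ ∑ n ∈ range N, B * (b n * x n ^ 2 + c n * x (n + 1) ^ 2) :=
        sum_le_sum fun n _ => hcauchy n
    _ = B * ∑ n ∈ range N, (b n * x n ^ 2 + c n * x (n + 1) ^ 2) := by rw [mul_sum]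
    _ ≤ B * (B * ∑ n ∈ range (N + 1), x n ^ 2) := by
      gcongr
      exact sum_two_tap_le hb hc (fun n => sq_nonneg (x n)) hbc hcb N
    _ = B ^ 2 * ∑ n ∈ range (N + 1), x n ^ 2 := by ring

end TwoTapFilter

lemma sqrt_le_div_mul_sqrt {S T k B : ℝ} (hk : 0 < k) (hB : 0 ≤ B) (h : k ^ 2 * S ≤ B ^ 2 * T) :
    √S ≤ B / k * √T := by
  have hS : S ≤ (B / k) ^ 2 * T := by
    rw [div_pow, div_mul_eq_mul_div, le_div_iff₀ (by positivity)]
    linarith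
  calc √S ≤ √((B / k) ^ 2 * T) := Real.sqrt_le_sqrt hS
    _ = B / k * √T := by rw [Real.sqrt_mul (sq_nonneg _), Real.sqrt_sq (by positivity)]

namespace ConstantOnTimeBuck

noncomputable section

def alpha (R C L Ton t : ℝ) : ℝ := 1 - (Ton + t) / (R * C) - Ton * (Ton + t) / (2 * L * C)

def beta (C Ton lam t : ℝ) : ℝ := (1 / C) * ((1 - lam) * Ton + t / 2)

def gamma (C Ton lam t : ℝ) : ℝ := (1 / C) * (lam * Ton + t / 2)

variable {R C L Ton lam tmin tmax t t' : ℝ}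

lemma alpha_eq (hR : R ≠ 0) (hC : C ≠ 0) :
    alpha R C L Ton t = 1 - (Ton + t) * (1 + Ton / (2 * (L / R))) / (R * C) := by
  unfold alpha
  field_simp
  ring

lemma abs_alpha_le (hR : 0 < R) (hC : 0 < C) (hL : 0 ≤ L) (hTon : 0 ≤ Ton)
    (htime : (Ton + tmax) * (1 + Ton / (2 * (L / R))) < R * C)
    (hmin : tmin ≤ t) (hmax : t ≤ tmax) :
    |alpha R C L Ton t| ≤ 1 - (Ton + tmin) * (1 + Ton / (2 * (L / R))) / (R * C) := by
  set μ := 1 + Ton / (2 * (L / R))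
  have hμ : 0 ≤ μ := by positivity
  rw [alpha_eq hR.ne' hC.ne', abs_le]
  constructor
  · have : ((Ton + t) * μ + (Ton + tmin) * μ) / (R * C) ≤ 2 := by
      rw [div_le_iff₀ (by positivity)]
      nlinarith
    rw [add_div] at this
    linarith
  · gcongr

lemma beta_nonneg (hC : 0 ≤ C) (hTon : 0 ≤ Ton) (hlam : lam ≤ 1) (ht : 0 ≤ t) :
    0 ≤ beta C Ton lam t := by
  unfold beta
  have : 0 ≤ 1 - lam := sub_nonneg.2 hlam
  positivity

lemma gamma_nonneg (hC : 0 ≤ C) (hTon : 0 ≤ Ton) (hlam : 0 ≤ lam) (ht : 0 ≤ t) :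
    0 ≤ gamma C Ton lam t := by
  unfold gamma
  positivity

lemma beta_add_gamma_le (hC : 0 < C) (ht : t ≤ tmax) (ht' : t' ≤ tmax) :
    beta C Ton lam t + gamma C Ton lam t' ≤ (Ton + tmax) / C := by
  have : beta C Ton lam t + gamma C Ton lam t' = (Ton + (t + t') / 2) / C := by
    unfold beta gamma; ring
  rw [this]
  gcongr
  linarith

lemma gain_eq (hR : R ≠ 0) (hC : C ≠ 0) (hmin : Ton + tmin ≠ 0) :
    R / (1 + Ton / (2 * (L / R))) * ((Ton + tmax) / (Ton + tmin)) =
      (Ton + tmax) / C / (1 - (1 - (Ton + tmin) * (1 + Ton / (2 * (L / R))) / (R * C))) := by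
  rw [sub_sub_cancel]
  field_simp

end

end ConstantOnTimeBuck

open ConstantOnTimeBuck

theorem voltage_block_gain_general (R C L Ton Toffmin Toffmax lam : ℝ)
    (hR : 0 < R) (hC : 0 < C) (hL : 0 < L) (hTon : 0 < Ton)
    (hTmin : 0 < Toffmin)
    (hlam0 : 0 ≤ lam) (hlam1 : lam ≤ 1)
    (htime : (Ton + Toffmax) * (1 + Ton / (2 * (L / R))) < R * C)
    (toff : ℕ → ℝ) (htoff : ∀ n, Toffmin ≤ toff n ∧ toff n ≤ Toffmax)
    (v i : ℕ → ℝ) (hv0 : v 0 = 0)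
    (hrec : ∀ n, v (n + 1) =
      (1 - (Ton + toff n) / (R * C) - Ton * (Ton + toff n) / (2 * L * C)) * v n
        + ((1 / C) * ((1 - lam) * Ton + toff n / 2)) * i n
        + ((1 / C) * (lam * Ton + toff n / 2)) * i (n + 1)) :
    ∀ N : ℕ, Real.sqrt (∑ n ∈ Finset.range (N + 1), v n ^ 2) ≤
      (R / (1 + Ton / (2 * (L / R)))) * ((Ton + Toffmax) / (Ton + Toffmin)) *
        Real.sqrt (∑ n ∈ Finset.range (N + 1), i n ^ 2) := by
  intro N
  have htoff0 : ∀ n, 0 ≤ toff n := fun n => hTmin.le.trans (htoff n).1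
  have hTs : 0 < Ton + Toffmax := by linarith [(htoff 0).1, (htoff 0).2]
  have hā : 1 - (Ton + Toffmin) * (1 + Ton / (2 * (L / R))) / (R * C) < 1 :=
    sub_lt_self 1 (by positivity)
  have hcontr := sum_sq_le_of_contractive_recursion (a := fun n => alpha R C L Ton (toff n)) hā
    (fun n => abs_alpha_le hR hC hL.le hTon.le htime (htoff n).1 (htoff n).2)
    hv0 (fun n => (hrec n).trans (add_assoc _ _ _)) N
  have hinput := sum_sq_two_tap_le (x := i) (B := (Ton + Toffmax) / C)
    (fun n => beta_nonneg hC.le hTon.le hlam1 (htoff0 n))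
    (fun n => gamma_nonneg hC.le hTon.le hlam0 (htoff0 n))
    (fun n => beta_add_gamma_le hC (htoff n).2 (htoff n).2)
    (fun n => beta_add_gamma_le hC (htoff (n + 1)).2 (htoff n).2) N
  rw [gain_eq hR.ne' hC.ne' (by positivity)]
  exact sqrt_le_div_mul_sqrt (sub_pos.2 hā) (by positivity) (hcontr.trans hinput)

/-- Large-signal ℓ₂ gain bound for the voltage block of a constant on-time
current-mode buck converter: under the time-constant condition
T_s^max (1 + T_on/(2τ₂)) < RC, the recursion
ṽ[n+1] = α(t_off[n])ṽ[n] + β(t_off[n])ĩ[n] + γ(t_off[n])ĩ[n+1]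
with T_off^min ≤ t_off[n] ≤ T_off^max and zero initial conditions satisfies
‖ṽ‖₂ ≤ Γ_{i→v} ‖ĩ‖₂ on every truncation, where
Γ_{i→v} = (R/(1 + T_on/(2τ₂)))·(T_s^max/T_s^min). -/
theorem voltage_block_gain (R C L Ton Toffmin Toffmax lam : ℝ)
    (hR : 0 < R) (hC : 0 < C) (hL : 0 < L) (hTon : 0 < Ton)
    (hTmin : 0 < Toffmin) (hTmax : 0 < Toffmax) (hminmax : Toffmin ≤ Toffmax)
    (hlam0 : 0 ≤ lam) (hlam1 : lam ≤ 1)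
    (htime : (Ton + Toffmax) * (1 + Ton / (2 * (L / R))) < R * C)
    (toff : ℕ → ℝ) (htoff : ∀ n, Toffmin ≤ toff n ∧ toff n ≤ Toffmax)
    (v i : ℕ → ℝ) (hv0 : v 0 = 0) (hi0 : i 0 = 0)
    (hrec : ∀ n, v (n + 1) =
      (1 - (Ton + toff n) / (R * C) - Ton * (Ton + toff n) / (2 * L * C)) * v n
        + ((1 / C) * ((1 - lam) * Ton + toff n / 2)) * i n
        + ((1 / C) * (lam * Ton + toff n / 2)) * i (n + 1)) :
    ∀ N : ℕ, Real.sqrt (∑ n ∈ Finset.range (N + 1), v n ^ 2) ≤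
      (R / (1 + Ton / (2 * (L / R)))) * ((Ton + Toffmax) / (Ton + Toffmin)) *
        Real.sqrt (∑ n ∈ Finset.range (N + 1), i n ^ 2) :=
  voltage_block_gain_general R C L Ton Toffmin Toffmax lam hR hC hL hTon hTmin hlam0 hlam1 htime
    toff htoff v i hv0 hrec
end
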